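/- Let γ ∈ C^∞(S¹, ℝ²\{0}) with det(γ, γ_x) = 1 and central affine curvature q (γ_{xx} = q γ). For ξ ∈ C^∞(S¹,ℝ), let δγ = ξ̃ = -(ξ_x/2)γ + ξγ_x be a variation of γ. Then the induced variation of the central affine curvature is δq = -(1/2)ξ_{xxx} + 2qξ_x + q_x ξ = -2(L₃)_q(ξ), where (L₃)_q(v) = (1/4)(v_{xxx} - 4qv_x - 2q_x v). -/

import Mathlib

open Real

/-- Determinant of the 2×2 matrix with columns `u`, `v`. -/
noncomputable def det2 (u v : Fin 2 → ℝ) : ℝ := u 0 * v 1 - u 1 * v 0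

/-- The third-order operator `(L₃)_q(v) = (1/4)(v_{xxx} - 4 q v_x - 2 q_x v)`. -/
noncomputable def L3 (q v : ℝ → ℝ) : ℝ → ℝ :=
  fun x => (1/4) * (deriv (deriv (deriv v)) x - 4 * q x * deriv v x - 2 * deriv q x * v x)

noncomputable def P1 (F : ℝ × ℝ → ℝ) : ℝ × ℝ → ℝ := fun p => fderiv ℝ F p (1, 0)
noncomputable def P2 (F : ℝ × ℝ → ℝ) : ℝ × ℝ → ℝ := fun p => fderiv ℝ F p (0, 1)

lemma contDiff_P1 {F : ℝ × ℝ → ℝ} (hF : ContDiff ℝ (⊤ : ℕ∞) F) : ContDiff ℝ (⊤ : ℕ∞) (P1 F) :=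
  (hF.fderiv_right (by simp)).clm_apply contDiff_const

lemma contDiff_P2 {F : ℝ × ℝ → ℝ} (hF : ContDiff ℝ (⊤ : ℕ∞) F) : ContDiff ℝ (⊤ : ℕ∞) (P2 F) :=
  (hF.fderiv_right (by simp)).clm_apply contDiff_const

lemma hasDerivAt_fst {F : ℝ × ℝ → ℝ} (hF : ContDiff ℝ (⊤ : ℕ∞) F) (s x : ℝ) :
    HasDerivAt (fun s => F (s, x)) (P1 F (s, x)) s := by
  have h1 : HasDerivAt (fun s : ℝ => (s, x)) ((1 : ℝ), (0 : ℝ)) s :=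
    (hasDerivAt_id s).prodMk (hasDerivAt_const s x)
  exact (hF.differentiable (by simp) (s, x)).hasFDerivAt.comp_hasDerivAt s h1

lemma hasDerivAt_snd {F : ℝ × ℝ → ℝ} (hF : ContDiff ℝ (⊤ : ℕ∞) F) (s x : ℝ) :
    HasDerivAt (fun x => F (s, x)) (P2 F (s, x)) x := by
  have h1 : HasDerivAt (fun x : ℝ => (s, x)) ((0 : ℝ), (1 : ℝ)) x :=
    (hasDerivAt_const x s).prodMk (hasDerivAt_id x)
  exact (hF.differentiable (by simp) (s, x)).hasFDerivAt.comp_hasDerivAt x h1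

lemma P_comm {F : ℝ × ℝ → ℝ} (hF : ContDiff ℝ (⊤ : ℕ∞) F) (p : ℝ × ℝ) :
    P1 (P2 F) p = P2 (P1 F) p := by
  have hd : Differentiable ℝ (fderiv ℝ F) :=
    (hF.fderiv_right (m := (⊤ : ℕ∞)) (by simp)).differentiable (by simp)
  have e1 : P1 (P2 F) p = fderiv ℝ (fderiv ℝ F) p (1, 0) (0, 1) := by
    have := fderiv_clm_apply (hd p) (differentiableAt_const ((0:ℝ), (1:ℝ)))
    show fderiv ℝ (fun y => (fderiv ℝ F y) ((0:ℝ), (1:ℝ))) p (1, 0) = _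
    rw [this]; simp
  have e2 : P2 (P1 F) p = fderiv ℝ (fderiv ℝ F) p (0, 1) (1, 0) := by
    have := fderiv_clm_apply (hd p) (differentiableAt_const ((1:ℝ), (0:ℝ)))
    show fderiv ℝ (fun y => (fderiv ℝ F y) ((1:ℝ), (0:ℝ))) p (0, 1) = _
    rw [this]; simp
  rw [e1, e2, (hF.contDiffAt.isSymmSndFDerivAt (by rw [minSmoothness_of_isRCLikeNormedField]; exact WithTop.coe_le_coe.mpr le_top)).eq]

/-- For a variation `δγ = ξ̃ = -(ξ_x/2)γ + ξγ_x` of a central-affine parametrized closed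
curve, the induced variation of the central affine curvature is
`δq = -(1/2)ξ_{xxx} + 2qξ_x + q_x ξ = -2(L₃)_q(ξ)`.
Here `γ s x` is a one-parameter family (parameter `s`) of curves. -/
theorem variation_of_curvature
    (γ : ℝ → ℝ → Fin 2 → ℝ) (q : ℝ → ℝ → ℝ) (ξ : ℝ → ℝ)
    (hγ : ContDiff ℝ (⊤ : ℕ∞) (fun p : ℝ × ℝ => γ p.1 p.2))
    (hq : ContDiff ℝ (⊤ : ℕ∞) (fun p : ℝ × ℝ => q p.1 p.2))
    (hξ : ContDiff ℝ (⊤ : ℕ∞) ξ)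
    (hγper : ∀ s x, γ s (x + 2 * π) = γ s x)
    (hqper : ∀ s x, q s (x + 2 * π) = q s x)
    (hξper : ∀ x, ξ (x + 2 * π) = ξ x)
    (hne : ∀ s x, γ s x ≠ 0)
    (hdet : ∀ s x, det2 (γ s x) (deriv (γ s) x) = 1)
    (hcurv : ∀ s x, deriv (deriv (γ s)) x = q s x • γ s x)
    (hvar : ∀ x, deriv (fun s => γ s x) 0
        = (-(deriv ξ x) / 2) • γ 0 x + ξ x • deriv (γ 0) x) :
    ∀ x, deriv (fun s => q s x) 0
        = -(1/2) * deriv (deriv (deriv ξ)) x + 2 * q 0 x * deriv ξ x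
          + deriv (q 0) x * ξ x
      ∧ deriv (fun s => q s x) 0 = -2 * L3 (q 0) ξ x := by
  -- component functions
  set F : Fin 2 → ℝ × ℝ → ℝ := fun i p => γ p.1 p.2 i with hF
  have hFi : ∀ i, ContDiff ℝ (⊤ : ℕ∞) (F i) := fun i => contDiff_pi.1 hγ i
  -- smoothness of ξ's derivatives
  have hξ1 : ContDiff ℝ (⊤ : ℕ∞) ξ := hξ.of_le (by simp)
  have hξd1 : Differentiable ℝ ξ := (contDiff_infty_iff_deriv.1 hξ1).1
  have hξc2 : ContDiff ℝ (⊤ : ℕ∞) (deriv ξ) := (contDiff_infty_iff_deriv.1 hξ1).2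
  have hξd2 : Differentiable ℝ (deriv ξ) := (contDiff_infty_iff_deriv.1 hξc2).1
  have hξc3 : ContDiff ℝ (⊤ : ℕ∞) (deriv (deriv ξ)) := (contDiff_infty_iff_deriv.1 hξc2).2
  have hξd3 : Differentiable ℝ (deriv (deriv ξ)) := (contDiff_infty_iff_deriv.1 hξc3).1
  -- x-derivatives of γ in terms of P2
  have derivγ : ∀ s x, deriv (γ s) x = fun i => P2 (F i) (s, x) := by
    intro s x
    rw [deriv_pi (fun i => (hasDerivAt_snd (hFi i) s x).differentiableAt)]
    exact funext fun i => (hasDerivAt_snd (hFi i) s x).deriv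
  have derivγ2 : ∀ s x, deriv (deriv (γ s)) x = fun i => P2 (P2 (F i)) (s, x) := by
    intro s x
    have hfun : deriv (γ s) = fun x i => P2 (F i) (s, x) := funext fun x => derivγ s x
    rw [hfun,
      deriv_pi (fun i => (hasDerivAt_snd (contDiff_P2 (hFi i)) s x).differentiableAt)]
    exact funext fun i => (hasDerivAt_snd (contDiff_P2 (hFi i)) s x).deriv
  -- curvature equation componentwise
  have curv_i : ∀ (i : Fin 2) s x, P2 (P2 (F i)) (s, x) = q s x * γ s x i := by
    intro i s x
    have h := congrFun (hcurv s x) i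
    rw [derivγ2 s x] at h
    simpa using h
  -- variation componentwise
  have vari : ∀ (i : Fin 2) x,
      P1 (F i) (0, x) = -(deriv ξ x) / 2 * γ 0 x i + ξ x * P2 (F i) (0, x) := by
    intro i x
    have h := congrFun (hvar x) i
    rw [deriv_pi (fun i => (hasDerivAt_fst (hFi i) 0 x).differentiableAt)] at h
    have h2 : deriv (fun s => F i (s, x)) 0 = P1 (F i) (0, x) :=
      (hasDerivAt_fst (hFi i) 0 x).deriv
    rw [derivγ 0 x] at h
    simpa [h2, smul_eq_mul] using h
  -- δq
  have hδq : ∀ x, deriv (fun s => q s x) 0 = P1 (fun p : ℝ × ℝ => q p.1 p.2) (0, x) :=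
    fun x => (hasDerivAt_fst hq 0 x).deriv
  -- q 0 derivative
  have hq0d : ∀ x, HasDerivAt (q 0) (P2 (fun p : ℝ × ℝ => q p.1 p.2) (0, x)) x :=
    fun x => hasDerivAt_snd hq 0 x
  have hq0deriv : ∀ x, deriv (q 0) x = P2 (fun p : ℝ × ℝ => q p.1 p.2) (0, x) :=
    fun x => (hq0d x).deriv
  -- master componentwise identity
  have key : ∀ (i : Fin 2) x, deriv (fun s => q s x) 0 * γ 0 x i =
      (-(1/2) * deriv (deriv (deriv ξ)) x + 2 * q 0 x * deriv ξ x
        + deriv (q 0) x * ξ x) * γ 0 x i := by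
    intro i x
    -- abbreviations for the slice functions
    set gi : ℝ → ℝ := fun x => F i (0, x) with hgi_def
    set gi' : ℝ → ℝ := fun x => P2 (F i) (0, x) with hgi'_def
    set gi'' : ℝ → ℝ := fun x => P2 (P2 (F i)) (0, x) with hgi''_def
    have hgiD : ∀ y, HasDerivAt gi (gi' y) y := fun y => hasDerivAt_snd (hFi i) 0 y
    have hgi'D : ∀ y, HasDerivAt gi' (gi'' y) y :=
      fun y => hasDerivAt_snd (contDiff_P2 (hFi i)) 0 y
    have hgi2 : ∀ y, gi'' y = q 0 y * gi y := fun y => curv_i i 0 y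
    have hgi''D : ∀ y, HasDerivAt gi''
        (deriv (q 0) y * gi y + q 0 y * gi' y) y := by
      intro y
      have : gi'' = fun y => q 0 y * gi y := funext hgi2
      rw [this]
      have := (hq0d y).mul (hgiD y)
      rw [hq0deriv y]; exact this
    -- d i = P1 (F i) (0, ·)
    set d : ℝ → ℝ := fun x => P1 (F i) (0, x) with hd_def
    have hdeq : d = fun x => -(deriv ξ x) / 2 * gi x + ξ x * gi' x := funext fun x => vari i x
    -- first derivative of d
    have hD1 : ∀ y, HasDerivAt d
        ((-(deriv (deriv ξ) y) / 2 * gi y + -(deriv ξ y) / 2 * gi' y)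
          + (deriv ξ y * gi' y + ξ y * gi'' y)) y := by
      intro y
      rw [hdeq]
      exact ((((hξd2 y).hasDerivAt.neg.div_const 2).mul (hgiD y)).add
        ((hξd1 y).hasDerivAt.mul (hgi'D y)))
    have hD1eq : deriv d = fun y =>
        (-(deriv (deriv ξ) y) / 2 * gi y + -(deriv ξ y) / 2 * gi' y)
          + (deriv ξ y * gi' y + ξ y * gi'' y) := funext fun y => (hD1 y).deriv
    -- second derivative of d
    have hD2 : HasDerivAt (deriv d)
        (((-(deriv (deriv (deriv ξ)) x) / 2 * gi x + -(deriv (deriv ξ) x) / 2 * gi' x)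
          + (-(deriv (deriv ξ) x) / 2 * gi' x + -(deriv ξ x) / 2 * gi'' x))
          + ((deriv (deriv ξ) x * gi' x + deriv ξ x * gi'' x)
          + (deriv ξ x * gi'' x + ξ x * (deriv (q 0) x * gi x + q 0 x * gi' x)))) x := by
      rw [hD1eq]
      exact (((((hξd3 x).hasDerivAt.neg.div_const 2).mul (hgiD x)).add
        (((hξd2 x).hasDerivAt.neg.div_const 2).mul (hgi'D x))).add
        ((((hξd2 x).hasDerivAt.mul (hgi'D x)).add
          (((hξd1 x).hasDerivAt.mul (hgi''D x))))))
    -- commuting partial derivatives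
    have hcomm : P1 (P2 (P2 (F i))) = P2 (P2 (P1 (F i))) := by
      have c1 : P1 (P2 (P2 (F i))) = P2 (P1 (P2 (F i))) :=
        funext (P_comm (contDiff_P2 (hFi i)))
      have c2 : P1 (P2 (F i)) = P2 (P1 (F i)) := funext (P_comm (hFi i))
      rw [c1, c2]
    -- deriv d = P2 (P1 (F i)) (0, ·) etc.
    have hdd1 : deriv d = fun y => P2 (P1 (F i)) (0, y) :=
      funext fun y => (hasDerivAt_snd (contDiff_P1 (hFi i)) 0 y).deriv
    -- the s-derivative of the curvature equation, left side
    have lhs1 : P1 (P2 (P2 (F i))) (0, x) = deriv (deriv d) x := by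
      rw [hcomm, hdd1]
      exact ((hasDerivAt_snd (contDiff_P2 (contDiff_P1 (hFi i))) 0 x).deriv).symm
    -- the s-derivative of the curvature equation, right side
    have lhs2 : P1 (P2 (P2 (F i))) (0, x)
        = deriv (fun s => q s x) 0 * gi x + q 0 x * d x := by
      have hfun : (fun s => P2 (P2 (F i)) (s, x)) = fun s => q s x * γ s x i :=
        funext fun s => curv_i i s x
      have h1 : deriv (fun s => P2 (P2 (F i)) (s, x)) 0 = P1 (P2 (P2 (F i))) (0, x) :=
        (hasDerivAt_fst (contDiff_P2 (contDiff_P2 (hFi i))) 0 x).deriv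
      have h2 : HasDerivAt (fun s => q s x * γ s x i)
          (P1 (fun p : ℝ × ℝ => q p.1 p.2) (0, x) * γ 0 x i
            + q 0 x * P1 (F i) (0, x)) 0 :=
        (hasDerivAt_fst hq 0 x).mul (hasDerivAt_fst (hFi i) 0 x)
      rw [← h1, hfun, h2.deriv, hδq x]
    -- assemble the master equation
    have master := lhs2.symm.trans lhs1
    rw [hD2.deriv] at master
    have hdx : d x = -(deriv ξ x) / 2 * gi x + ξ x * gi' x := congrFun hdeq x
    rw [hdx, hgi2 x] at master
    have hgval : γ 0 x i = gi x := rfl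
    rw [hgval]
    linear_combination master
  intro x
  obtain ⟨i, hi⟩ := Function.ne_iff.1 (hne 0 x)
  have hT := mul_right_cancel₀ hi (key i x)
  refine ⟨hT, ?_⟩
  rw [hT]
  simp only [L3]
  ring
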